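/- Let (σ, A, a) be a substitution satisfying condition (C) that projects onto a primitive substitution (τ, B, b), and let σ' be a principal sub-substitution of σ. Then σ' and τ have the same dominant eigenvalue. -/

import Mathlib

/-- Apply a substitution (given on letters) to a word. -/
def Subst.apply {A : Type*} (σ : A → List A) (w : List A) : List A := (w.map σ).flatten

/-- A substitution is primitive if some iterate maps every letter to a word containing
every letter. -/
def Primitive {A : Type*} (σ : A → List A) : Prop :=
  ∃ n : ℕ, 0 < n ∧ ∀ c d : A, d ∈ (Subst.apply σ)^[n] [c]

/-- Incidence matrix of a substitution. -/
noncomputable def IncMat {A : Type*} [Fintype A] [DecidableEq A] (σ : A → List A) :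
    Matrix A A ℝ := Matrix.of fun i j => ((σ j).count i : ℝ)

/-- Incidence matrix of the sub-substitution associated with the component `i` of the
partition `P`: apply `σ`, erase the letters outside the component, and count occurrences. -/
noncomputable def SubIncMat {A : Type*} [Fintype A] [DecidableEq A] {l : ℕ}
    (σ : A → List A) (P : A → Fin l) (i : Fin l) :
    Matrix {x // P x = i} {x // P x = i} ℝ :=
  Matrix.of fun r c => ((((σ c.1).filter (fun x => P x == i)).count r.1 : ℕ) : ℝ)

/-- `α` is the dominant (Perron) eigenvalue of the real matrix `M`. -/
def IsDomEig {n : Type*} [Fintype n] [DecidableEq n] (M : Matrix n n ℝ) (α : ℝ) : Prop :=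
  Module.End.HasEigenvalue (Matrix.toLin' M) α ∧
  ∀ μ : ℂ, Module.End.HasEigenvalue (Matrix.toLin' (M.map Complex.ofReal)) μ →
    ‖μ‖ ≤ α

/-- Condition (C) for a substitution `σ`, with respect to the partition of the alphabet given
by `P : A → Fin l` into primitive components (the principal ones being those of index `≥ q`),
with distinguished starting letters `st i` for each component. -/
def ConditionC {A : Type*} (σ : A → List A) {l : ℕ} (q : ℕ) (P : A → Fin l)
    (st : Fin l → A) : Prop :=
  q + 1 ≤ l ∧ Function.Surjective P ∧ (∀ c : A, σ c ≠ []) ∧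
  (∀ c d : A, d ∈ σ c → P c ≤ P d) ∧
  (∀ i : Fin l, (i : ℕ) < q →
    (∀ c d : A, P c = i → P d = i → d ∉ σ c) ∨ (∀ c d : A, P c = i → P d = i → d ∈ σ c)) ∧
  (∀ i : Fin l, q ≤ (i : ℕ) → ∀ c d : A, P c = i → P d = i → d ∈ σ c) ∧
  (∀ c d : A, q ≤ ((P c) : ℕ) → q ≤ ((P d) : ℕ) → P c ≠ P d → d ∉ σ c) ∧
  (∀ i : Fin l, (i : ℕ) < q → ∃ c d : A, P c = i ∧ i < P d ∧ d ∈ σ c) ∧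
  (∀ i : Fin l, P (st i) = i) ∧
  (∀ i : Fin l, (i : ℕ) < q → (∃ c d : A, P c = i ∧ P d = i ∧ d ∈ σ c) →
    ((σ (st i)).filter (fun x => P x == i)).head? = some (st i)) ∧
  (∀ i : Fin l, q ≤ (i : ℕ) → ∃ u : List A, u ≠ [] ∧ σ (st i) = st i :: u)

/-!
The principal component is closed under `σ`, so `σ` restricts to a substitution `σ'` on it, and
`ψ` intertwines `σ'` with `τ`. For the incidence matrices `M` of `σ'` and `N` of `τ` this reads
`N Ψ = Ψ M`, where `Ψ` is the 0/1 matrix of `ψ`; hence every column sum of `Mⁿ` is the column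
sum of `Nⁿ` at the image letter. Primitivity of `τ` forces `ψ` to map the component onto `B`,
so the maximal column sums, i.e. the `ℓ¹` operator norms, of `Mⁿ` and `Nⁿ` coincide for all
`n`, and Gelfand's formula gives equal spectral radii. For a dominant eigenvalue the spectral
radius is the eigenvalue itself.
-/

open Matrix

section Spectrum

theorem Matrix.spectrum_transpose {n K : Type*} [Fintype n] [DecidableEq n] [Field K]
    (A : Matrix n n K) : spectrum K Aᵀ = spectrum K A := by
  ext μ
  rw [mem_spectrum_iff_isRoot_charpoly, mem_spectrum_iff_isRoot_charpoly, charpoly_transpose]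

theorem Matrix.hasEigenvalue_toLin'_iff_mem_spectrum {n K : Type*} [Fintype n] [DecidableEq n]
    [Field K] (A : Matrix n n K) (μ : K) :
    Module.End.HasEigenvalue (toLin' A) μ ↔ μ ∈ spectrum K A := by
  rw [Module.End.hasEigenvalue_iff_mem_spectrum, spectrum_toLin']

theorem Matrix.ofReal_mem_spectrum_map {n : Type*} [Fintype n] [DecidableEq n]
    {A : Matrix n n ℝ} {γ : ℝ} (h : γ ∈ spectrum ℝ A) :
    (γ : ℂ) ∈ spectrum ℂ (A.map Complex.ofReal) := by
  rw [mem_spectrum_iff_isRoot_charpoly] at h ⊢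
  exact (charpoly_map A Complex.ofRealHom).symm ▸ h.map

theorem spectralRadius_eq_of_forall_nnnorm_pow_eq {A B : Type*}
    [NormedRing A] [NormedAlgebra ℂ A] [CompleteSpace A]
    [NormedRing B] [NormedAlgebra ℂ B] [CompleteSpace B] {a : A} {b : B}
    (h : ∀ n : ℕ, ‖a ^ n‖₊ = ‖b ^ n‖₊) : spectralRadius ℂ a = spectralRadius ℂ b :=
  tendsto_nhds_unique (by simpa only [h] using
    spectrum.pow_nnnorm_pow_one_div_tendsto_nhds_spectralRadius a)
    (spectrum.pow_nnnorm_pow_one_div_tendsto_nhds_spectralRadius b)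

end Spectrum

section DominantEigenvalue

variable {n : Type*} [Fintype n] [DecidableEq n] {X : Matrix n n ℝ} {γ : ℝ}

theorem IsDomEig.mem_spectrum (h : IsDomEig X γ) :
    (γ : ℂ) ∈ spectrum ℂ (X.map Complex.ofReal) :=
  Matrix.ofReal_mem_spectrum_map ((X.hasEigenvalue_toLin'_iff_mem_spectrum γ).mp h.1)

theorem IsDomEig.norm_le (h : IsDomEig X γ) {μ : ℂ} (hμ : μ ∈ spectrum ℂ (X.map Complex.ofReal)) :
    ‖μ‖ ≤ γ :=
  h.2 μ ((Matrix.hasEigenvalue_toLin'_iff_mem_spectrum _ μ).mpr hμ)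

theorem IsDomEig.nonneg (h : IsDomEig X γ) : 0 ≤ γ :=
  (norm_nonneg _).trans (h.norm_le h.mem_spectrum)

theorem IsDomEig.spectralRadius_transpose_eq (h : IsDomEig X γ) :
    spectralRadius ℂ (X.map Complex.ofReal)ᵀ = ENNReal.ofReal γ := by
  rw [spectralRadius, Matrix.spectrum_transpose]
  refine le_antisymm (iSup₂_le fun μ hμ => ?_) ?_
  · rw [← enorm_eq_nnnorm, ← ofReal_norm]
    exact ENNReal.ofReal_le_ofReal (h.norm_le hμ)
  · refine le_iSup₂_of_le (γ : ℂ) h.mem_spectrum ?_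
    rw [← enorm_eq_nnnorm, ← ofReal_norm, Complex.norm_real, Real.norm_of_nonneg h.nonneg]

end DominantEigenvalue

def projMat {S B : Type*} (R : Type*) [DecidableEq B] [Zero R] [One R] (f : S → B) :
    Matrix B S R :=
  of fun b s => if f s = b then 1 else 0

section ProjMat

variable {S B R : Type*} [DecidableEq B] [NonAssocSemiring R] (f : S → B)

theorem mul_projMat_apply [Fintype B] {m : Type*} (N : Matrix m B R) (b : m) (s : S) :
    (N * projMat R f) b s = N b (f s) := by
  simp [projMat, mul_apply]

theorem projMat_mul_apply [Fintype S] {m : Type*} (M : Matrix S m R) (b : B) (c : m) :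
    (projMat R f * M) b c = ∑ s with f s = b, M s c := by
  simp [projMat, mul_apply, Finset.sum_filter]

theorem vecMul_projMat [Fintype B] (v : B → R) : v ᵥ* projMat R f = v ∘ f := by
  ext s
  simp [projMat, vecMul, dotProduct]

end ProjMat

theorem vecMul_one_pow_eq_of_mul_projMat {S B R : Type*} [Fintype S] [DecidableEq S]
    [Fintype B] [DecidableEq B] [CommSemiring R] {M : Matrix S S R} {N : Matrix B B R}
    {f : S → B} (h : N * projMat R f = projMat R f * M) (k : ℕ) :
    1 ᵥ* M ^ k = (1 ᵥ* N ^ k) ∘ f := by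
  have hk : N ^ k * projMat R f = projMat R f * M ^ k := by
    induction k with
    | zero => simp
    | succ k ih => rw [pow_succ, pow_succ, Matrix.mul_assoc, h, ← Matrix.mul_assoc, ih,
        Matrix.mul_assoc]
  calc 1 ᵥ* M ^ k = 1 ᵥ* projMat R f ᵥ* M ^ k := by rw [vecMul_projMat]; rfl
    _ = (1 ᵥ* N ^ k) ∘ f := by rw [vecMul_vecMul, ← hk, ← vecMul_vecMul, vecMul_projMat]

section LinftyNorm

attribute [local instance] Matrix.linftyOpNormedAddCommGroup Matrix.linftyOpNormedRing
  Matrix.linftyOpNormedAlgebra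

theorem Matrix.linfty_opNNNorm_map_ofReal_transpose {m n : Type*} [Fintype m] [Fintype n]
    {X : Matrix m n ℝ} (hX : ∀ i j, 0 ≤ X i j) :
    ‖(X.map Complex.ofReal)ᵀ‖₊ = Finset.univ.sup fun j => ((1 ᵥ* X) j).toNNReal := by
  rw [linfty_opNNNorm_def]
  refine Finset.sup_congr rfl fun j _ => ?_
  simp only [transpose_apply, map_apply, Complex.nnnorm_real, vecMul, dotProduct, Pi.one_apply,
    one_mul]
  rw [Real.toNNReal_sum_of_nonneg fun i _ => hX i j]
  exact Finset.sum_congr rfl fun i _ => NNReal.eq <| by simp [hX i j]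

theorem Matrix.spectralRadius_transpose_eq_of_mul_projMat {S B : Type*} [Fintype S]
    [DecidableEq S] [Fintype B] [DecidableEq B] {M : Matrix S S ℝ} {N : Matrix B B ℝ}
    (hM : ∀ r s, 0 ≤ M r s) (hN : ∀ b c, 0 ≤ N b c) {f : S → B}
    (hf : Function.Surjective f) (h : N * projMat ℝ f = projMat ℝ f * M) :
    spectralRadius ℂ (M.map Complex.ofReal)ᵀ = spectralRadius ℂ (N.map Complex.ofReal)ᵀ := by
  refine spectralRadius_eq_of_forall_nnnorm_pow_eq fun k => ?_
  rw [← transpose_pow, ← transpose_pow,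
    show (M.map Complex.ofReal) ^ k = (M ^ k).map Complex.ofReal from
      (M.map_pow Complex.ofRealHom k).symm,
    show (N.map Complex.ofReal) ^ k = (N ^ k).map Complex.ofReal from
      (N.map_pow Complex.ofRealHom k).symm,
    linfty_opNNNorm_map_ofReal_transpose (pow_apply_nonneg hM k),
    linfty_opNNNorm_map_ofReal_transpose (pow_apply_nonneg hN k),
    vecMul_one_pow_eq_of_mul_projMat h]
  rw [← Finset.image_univ_of_surjective hf, Finset.sup_image]
  rfl

end LinftyNorm

theorem IsDomEig.eq_of_mul_projMat_eq {S B : Type*} [Fintype S] [DecidableEq S] [Fintype B]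
    [DecidableEq B] {M : Matrix S S ℝ} {N : Matrix B B ℝ} {β α : ℝ}
    (hβ : IsDomEig M β) (hα : IsDomEig N α) (hM : ∀ r s, 0 ≤ M r s) (hN : ∀ b c, 0 ≤ N b c)
    {f : S → B} (hf : Function.Surjective f) (h : N * projMat ℝ f = projMat ℝ f * M) :
    β = α := by
  have hρ := Matrix.spectralRadius_transpose_eq_of_mul_projMat hM hN hf h
  rw [hβ.spectralRadius_transpose_eq, hα.spectralRadius_transpose_eq] at hρ
  exact (ENNReal.ofReal_eq_ofReal_iff hβ.nonneg hα.nonneg).mp hρ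

namespace Subst

variable {A B : Type*}

theorem map_apply {σ : A → List A} {τ : B → List B} {ψ : A → B}
    (hψ : ∀ c, (σ c).map ψ = τ (ψ c)) (w : List A) :
    (apply σ w).map ψ = apply τ (w.map ψ) := by
  simp [apply, List.map_flatten, Function.comp_def, hψ]

theorem map_iterate_apply {σ : A → List A} {τ : B → List B} {ψ : A → B}
    (hψ : ∀ c, (σ c).map ψ = τ (ψ c)) (n : ℕ) (w : List A) :
    ((apply σ)^[n] w).map ψ = (apply τ)^[n] (w.map ψ) := by
  induction n generalizing w with
  | zero => rfl
  | succ n ih => rw [Function.iterate_succ_apply, Function.iterate_succ_apply, ih, map_apply hψ]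

theorem mem_of_mem_iterate_apply {σ : A → List A} {p : A → Prop}
    (hp : ∀ c, p c → ∀ d ∈ σ c, p d) (n : ℕ) {w : List A} (hw : ∀ x ∈ w, p x) :
    ∀ x ∈ (apply σ)^[n] w, p x := by
  induction n generalizing w with
  | zero => exact hw
  | succ n ih =>
    refine ih fun y hy => ?_
    obtain ⟨_, hl, hyc⟩ := List.mem_flatten.mp hy
    obtain ⟨c, hc, rfl⟩ := List.mem_map.mp hl
    exact hp c (hw c hc) y hyc

def restrict (σ : A → List A) {p : A → Prop} (hp : ∀ c, p c → ∀ d ∈ σ c, p d) :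
    {x // p x} → List {x // p x} :=
  fun c => (σ c).pmap Subtype.mk (hp c c.2)

theorem map_val_restrict {σ : A → List A} {p : A → Prop} (hp : ∀ c, p c → ∀ d ∈ σ c, p d)
    (c : {x // p x}) : (restrict σ hp c).map Subtype.val = σ c := by
  simp [restrict, List.map_pmap]

end Subst

theorem List.count_map_eq_sum_count {α β : Type*} [Fintype α] [DecidableEq α] [DecidableEq β]
    (f : α → β) (w : List α) (b : β) :
    (w.map f).count b = ∑ a with f a = b, w.count a := by
  induction w with
  | nil => simp
  | cons x w ih =>
    simp [List.count_cons, ih, Finset.sum_add_distrib, Finset.sum_ite_eq]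

theorem Primitive.surjective_of_map_eq {A B : Type*} {σ : A → List A} {τ : B → List B}
    (hτ : Primitive τ) {ψ : A → B} (hψ : ∀ c, (σ c).map ψ = τ (ψ c)) {p : A → Prop}
    (hp : ∀ c, p c → ∀ d ∈ σ c, p d) {c : A} (hc : p c) :
    Function.Surjective fun x : {x // p x} => ψ x := by
  obtain ⟨n, -, hn⟩ := hτ
  intro b
  have hb : b ∈ ((Subst.apply σ)^[n] [c]).map ψ := by
    rw [Subst.map_iterate_apply hψ]
    exact hn (ψ c) b
  obtain ⟨x, hx, rfl⟩ := List.mem_map.mp hb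
  exact ⟨⟨x, Subst.mem_of_mem_iterate_apply hp n (by simpa using hc) x hx⟩, rfl⟩

section IncidenceMatrix

variable {A B : Type*} [Fintype A] [DecidableEq A] [Fintype B] [DecidableEq B]

theorem incMat_nonneg (σ : A → List A) (r c : A) : 0 ≤ IncMat σ r c :=
  Nat.cast_nonneg _

theorem incMat_mul_projMat {σ : A → List A} {τ : B → List B} {ψ : A → B}
    (hψ : ∀ c, (σ c).map ψ = τ (ψ c)) :
    IncMat τ * projMat ℝ ψ = projMat ℝ ψ * IncMat σ := by
  ext b c
  simp only [mul_projMat_apply, projMat_mul_apply, IncMat, Matrix.of_apply, ← hψ,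
    List.count_map_eq_sum_count, Nat.cast_sum]

theorem subIncMat_eq_incMat_restrict {l : ℕ} {σ : A → List A} {P : A → Fin l} {i : Fin l}
    (hi : ∀ c, P c = i → ∀ d ∈ σ c, P d = i) :
    SubIncMat σ P i = IncMat (Subst.restrict σ hi) := by
  ext r c
  simp only [SubIncMat, IncMat, Matrix.of_apply]
  rw [List.filter_eq_self.mpr fun x hx => by simpa using hi c c.2 x hx,
    ← Subst.map_val_restrict hi c, List.count_map_of_injective _ _ Subtype.val_injective]
  -- `Subtype.instBEq` versus the `BEq` derived from `DecidableEq`: equal since both are lawful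
  congr!

end IncidenceMatrix

theorem ConditionC.mem_principal_of_mem {A : Type*} {σ : A → List A} {l q : ℕ} {P : A → Fin l}
    {st : Fin l → A} (hC : ConditionC σ q P st) {i : Fin l} (hi : q ≤ (i : ℕ)) :
    ∀ c, P c = i → ∀ d ∈ σ c, P d = i := by
  obtain ⟨-, -, -, hmono, -, -, hsep, -⟩ := hC
  intro c hc d hd
  by_contra hdi
  subst hc
  exact hsep c d hi (hi.trans (hmono c d hd)) (Ne.symm hdi) hd

theorem stmt12_general {A B : Type*} [Fintype A] [DecidableEq A] [Fintype B] [DecidableEq B]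
    (σ : A → List A) (τ : B → List B)
    {l : ℕ} (q : ℕ) (P : A → Fin l) (st : Fin l → A)
    (hC : ConditionC σ q P st)
    -- σ projects onto the primitive substitution τ via the letter-to-letter morphism ψ
    (ψ : A → B) (hψ : ∀ c : A, List.map ψ (σ c) = τ (ψ c))
    (hτprim : Primitive τ)
    -- σ' : the principal sub-substitution associated with a principal component i
    (i : Fin l) (hi : q ≤ (i : ℕ))
    (α β : ℝ) (hα : IsDomEig (IncMat τ) α) (hβ : IsDomEig (SubIncMat σ P i) β) :
    β = α := by
  have hclosed := hC.mem_principal_of_mem hi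
  have hψi : ∀ c, (Subst.restrict σ hclosed c).map (ψ ∘ Subtype.val) = τ (ψ c) := fun c => by
    rw [← List.map_map, Subst.map_val_restrict, hψ]
  obtain ⟨c, hc⟩ := hC.2.1 i
  rw [subIncMat_eq_incMat_restrict hclosed] at hβ
  exact hβ.eq_of_mul_projMat_eq hα (incMat_nonneg _) (incMat_nonneg τ)
    (hτprim.surjective_of_map_eq hψ hclosed hc) (incMat_mul_projMat hψi)

theorem stmt12 {A B : Type*} [Fintype A] [DecidableEq A] [Fintype B] [DecidableEq B]
    (σ : A → List A) (τ : B → List B) (a : A) (b : B)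
    {l : ℕ} (q : ℕ) (P : A → Fin l) (st : Fin l → A)
    (hC : ConditionC σ q P st)
    (hσa : ∃ u : List A, u ≠ [] ∧ σ a = a :: u) (hτb : ∃ u : List B, u ≠ [] ∧ τ b = b :: u)
    -- σ projects onto the primitive substitution τ via the letter-to-letter morphism ψ
    (ψ : A → B) (hψa : ψ a = b) (hψ : ∀ c : A, List.map ψ (σ c) = τ (ψ c))
    (hτprim : Primitive τ)
    -- σ' : the principal sub-substitution associated with a principal component i
    (i : Fin l) (hi : q ≤ (i : ℕ))
    (α β : ℝ) (hα : IsDomEig (IncMat τ) α) (hβ : IsDomEig (SubIncMat σ P i) β) :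
    β = α :=
  stmt12_general σ τ q P st hC ψ hψ hτprim i hi α β hα hβ
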